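/- arXiv:1211.2910 — 2 statements merged into one kernel-verified Lean document; each statement's English description precedes it below -/
import Mathlib

section
/- Let I be a finite index set, τ : I → I an involution without fixed points, λ > 1, and real numbers (k_i)_{i∈I}, integers (r_i)_{i∈I} with r_i ≠ 0, satisfying k_{τ(i)} = -k_i λ^{-r_i} and r_{τ(i)} = -r_i for all i. For n ≥ 1 define I_n ⊂ I (with I_n = I for all n ≥ some n₀, and I_m ⊂ I_n for m ≤ n), k_{i,n} = λⁿ k_i for i ∈ I_n and k_{i,n} = 0 otherwise, such that i ∈ I_n iff n + r_i ≥ 1 and additional constraints hold, and set, for σ > 0, π_{n,m} = σ² ∑_{i ∈ I_n, r_i = m-n} k_{i,n}² for n ≠ m and π_n = σ² ∑_{i∈I_n} k_{i,n}². Then the matrix Π with off-diagonal entries π_{n,m} and diagonal entries -π_n is a stable, conservative, symmetric q-matrix; in particular π_{n,m} = π_{m,n} for all n ≠ m. -/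
/-!
The involution `τ` pairs the jump `i` from level `n` to `n + r i` with the jump `τ i` from
`n + r i` back to `n`, and the relations on `k`, `r`, `h` make the squared coefficients of paired
jumps equal; summing over the pairs gives symmetry. For conservativity, the row sum regroups
`∑ i, kk i n ^ 2` by target level `n + r i`; jumps to a level below `1` carry no weight, and no jump
stays at `n` because `r i ≠ 0`.
-/

open Finset

theorem hasSum_ite_sum_filter_eq {I : Type*} [Fintype I] (f : I → ℤ) (w : I → ℝ)
    (p : ℤ → Prop) [DecidablePred p] (hw : ∀ i, ¬ p (f i) → w i = 0) :
    HasSum (fun m => if p m then ∑ i ∈ univ.filter (fun i => f i = m), w i else 0)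
      (∑ i, w i) := by
  have hfun : (fun m => if p m then ∑ i ∈ univ.filter (fun i => f i = m), w i else 0) =
      fun m => ∑ i, if m = f i then w i else 0 := by
    funext m
    rw [sum_filter]
    split_ifs with hm
    · exact sum_congr rfl fun i _ => by simp only [eq_comm]
    · refine (sum_eq_zero fun i _ => ?_).symm
      split_ifs with hi
      · exact hw i (hi ▸ hm)
      · rfl
  rw [hfun]
  exact hasSum_sum fun i _ => hasSum_ite_eq (f i) (w i)

theorem sum_filter_jump_eq_of_involutive {I : Type*} [Fintype I] {τ : I → I}
    (hτ : Function.Involutive τ) {r : I → ℤ} (hrτ : ∀ i, r (τ i) = -r i)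
    (w : I → ℤ → ℝ) {n m : ℤ} (hw : ∀ i, r i = m - n → w (τ i) m = w i n) :
    ∑ i ∈ univ.filter (fun i => r i = m - n), w i n =
      ∑ i ∈ univ.filter (fun i => r i = n - m), w i m := by
  refine sum_nbij' τ τ (fun i hi => ?_) (fun i hi => ?_) (fun i _ => hτ i) (fun i _ => hτ i)
    fun i hi => (hw i (mem_filter.1 hi).2).symm
  · simp only [mem_filter, mem_univ, true_and] at hi ⊢
    rw [hrτ, hi]
    ring
  · simp only [mem_filter, mem_univ, true_and] at hi ⊢
    have hrττ := hrτ (τ i)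
    rw [hτ i] at hrττ
    omega

theorem sq_zpow_mul_neg_mul_zpow_neg {lam : ℝ} (hlam : lam ≠ 0) (a : ℝ) (n r : ℤ) :
    (lam ^ (n + r) * (-a * lam ^ (-r))) ^ 2 = (lam ^ n * a) ^ 2 := by
  have hpow : lam ^ (n + r) * lam ^ (-r) = lam ^ n := by
    rw [← zpow_add₀ hlam, add_neg_cancel_right]
  calc (lam ^ (n + r) * (-a * lam ^ (-r))) ^ 2 = (lam ^ (n + r) * lam ^ (-r)) ^ 2 * a ^ 2 := by
        ring
    _ = (lam ^ n * a) ^ 2 := by rw [hpow]; ring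

section ShellCoefficients

variable {I : Type*} {τ : I → I} {lam : ℝ} {k : I → ℝ} {r h : I → ℤ} {kk : I → ℤ → ℝ}

theorem sq_coeff_involution_shift (hlam : lam ≠ 0)
    (hk : ∀ i, k (τ i) = -k i * lam ^ (-r i)) (hrτ : ∀ i, r (τ i) = -r i)
    (hh : ∀ i, h (τ i) = h i - r i)
    (hkk : ∀ i n, kk i n = if 1 ≤ n + r i ∧ 1 ≤ n + h i then lam ^ n * k i else 0)
    {i : I} {n : ℤ} (hn : 1 ≤ n) (hnr : 1 ≤ n + r i) :
    kk (τ i) (n + r i) ^ 2 = kk i n ^ 2 := by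
  have hnh_shift : n + r i + (h i - r i) = n + h i := by ring
  rw [hkk, hkk, hrτ, hh, add_neg_cancel_right, hnh_shift]
  by_cases hnh : 1 ≤ n + h i
  · rw [if_pos ⟨hn, hnh⟩, if_pos ⟨hnr, hnh⟩, hk]
    exact sq_zpow_mul_neg_mul_zpow_neg hlam (k i) n (r i)
  · simp [hnh]

theorem coeff_eq_zero_of_add_lt_one
    (hkk : ∀ i n, kk i n = if 1 ≤ n + r i ∧ 1 ≤ n + h i then lam ^ n * k i else 0)
    {i : I} {n : ℤ} (hnr : n + r i < 1) : kk i n = 0 := by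
  rw [hkk, if_neg fun hcond => hnr.not_ge hcond.1]

end ShellCoefficients

theorem stmt_2_general {I : Type*} [Fintype I] (τ : I → I)
    (hτinv : ∀ i, τ (τ i) = i)
    (lam σ : ℝ) (hlam : 1 < lam)
    (k : I → ℝ) (r h : I → ℤ) (hr : ∀ i, r i ≠ 0)
    (hk : ∀ i, k (τ i) = -k i * lam ^ (-r i))
    (hrτ : ∀ i, r (τ i) = -r i)
    (hh : ∀ i, h (τ i) = h i - r i)
    (kk : I → ℤ → ℝ)
    (hkk : ∀ i n, kk i n =
      if 1 ≤ n + r i ∧ 1 ≤ n + h i then lam ^ n * k i else 0)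
    (π : ℤ → ℤ → ℝ) (πd : ℤ → ℝ)
    (hπ : ∀ n m, π n m =
      σ ^ 2 * ∑ i ∈ Finset.univ.filter (fun i => r i = m - n), (kk i n) ^ 2)
    (hπd : ∀ n, πd n = σ ^ 2 * ∑ i, (kk i n) ^ 2) :
    -- stability/q-matrix sign conditions
    (∀ n m, n ≠ m → 0 ≤ π n m) ∧ (∀ n, 0 ≤ πd n) ∧
    -- symmetry
    (∀ n m, 1 ≤ n → 1 ≤ m → n ≠ m → π n m = π m n) ∧
    -- conservativity
    (∀ n, 1 ≤ n →
      HasSum (fun m : ℤ => if 1 ≤ m ∧ m ≠ n then π n m else 0) (πd n)) := by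
  have hlam0 : lam ≠ 0 := by linarith
  refine ⟨fun n m _ => hπ n m ▸ by positivity, fun n => hπd n ▸ by positivity,
    fun n m hn hm _ => ?_, fun n hn => ?_⟩
  · rw [hπ n m, hπ m n, sum_filter_jump_eq_of_involutive hτinv hrτ (fun i n => kk i n ^ 2)]
    intro i hi
    obtain rfl : m = n + r i := by omega
    exact sq_coeff_involution_shift hlam0 hk hrτ hh hkk hn hm
  · have hfibre : ∀ m, univ.filter (fun i => r i = m - n) = univ.filter (fun i => n + r i = m) :=
      fun m => filter_congr fun i _ => by omega
    simp only [hπ, hπd, hfibre, mul_sum]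
    refine hasSum_ite_sum_filter_eq (fun i => n + r i) _ _ fun i hi => ?_
    have hlt : n + r i < 1 := by
      have := hr i
      omega
    rw [coeff_eq_zero_of_add_lt_one hkk hlt]
    ring

/-- **The matrix of second-moment equations is a stable, conservative, symmetric
q-matrix.** Given shell-model coefficients satisfying the local-conservativity
algebraic relations, the matrix with off-diagonal entries
`π n m = σ² ∑_{i ∈ I_n, r_i = m-n} k_{i,n}²` and diagonal `-π_n`,
`π_n = σ² ∑_{i ∈ I_n} k_{i,n}²`, is symmetric and conservative (each row,
restricted to indices `m ≥ 1`, `m ≠ n`, sums to `π_n`). -/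
theorem stmt_2 {I : Type*} [Fintype I] (τ : I → I)
    (hτinv : ∀ i, τ (τ i) = i) (hτnofix : ∀ i, τ i ≠ i)
    (lam σ : ℝ) (hlam : 1 < lam) (hσ : 0 < σ)
    (k : I → ℝ) (r h : I → ℤ) (hr : ∀ i, r i ≠ 0)
    (hk : ∀ i, k (τ i) = -k i * lam ^ (-r i))
    (hrτ : ∀ i, r (τ i) = -r i)
    (hh : ∀ i, h (τ i) = h i - r i)
    (kk : I → ℤ → ℝ)
    (hkk : ∀ i n, kk i n =
      if 1 ≤ n + r i ∧ 1 ≤ n + h i then lam ^ n * k i else 0)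
    (π : ℤ → ℤ → ℝ) (πd : ℤ → ℝ)
    (hπ : ∀ n m, π n m =
      σ ^ 2 * ∑ i ∈ Finset.univ.filter (fun i => r i = m - n), (kk i n) ^ 2)
    (hπd : ∀ n, πd n = σ ^ 2 * ∑ i, (kk i n) ^ 2) :
    -- stability/q-matrix sign conditions
    (∀ n m, n ≠ m → 0 ≤ π n m) ∧ (∀ n, 0 ≤ πd n) ∧
    -- symmetry
    (∀ n m, 1 ≤ n → 1 ≤ m → n ≠ m → π n m = π m n) ∧
    -- conservativity
    (∀ n, 1 ≤ n →
      HasSum (fun m : ℤ => if 1 ≤ m ∧ m ≠ n then π n m else 0) (πd n)) :=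
  stmt_2_general τ hτinv lam σ hlam k r h hr hk hrτ hh kk hkk π πd hπ hπd
end

section
/- Let (T_n)_{n≥1} be nonnegative random variables on a probability space such that for each n, P(T_n > t) ≤ e^{-t/ν_n} for all t ≥ 0, where ν_n > 0 with ν := ∑_n ν_n < ∞ and Λ := -∑_n ν_n log ν_n < ∞. Then for every t ≥ 0, P(∑_{n≥1} T_n > t) ≤ ν e^{(Λ - t)/ν}; in particular ∑_n T_n is almost surely finite and its tail decays exponentially. -/
/-!
Split the level `t` as `t = ∑ θₙ` with thresholds `θₙ ≥ 0` and apply the union bound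
`P(∑ Tₙ > t) ≤ ∑ P(Tₙ > θₙ) ≤ ∑ e^{-θₙ/νₙ}`. Choosing `θₙ` so that every term equals
`νₙ e^{(Λ-t)/ν}` makes the thresholds add up to exactly `t` and the bound sum to `ν e^{(Λ-t)/ν}`.
If some `θₙ` is negative, its term alone already exceeds `1`, so the bound is trivial.
-/

open MeasureTheory

theorem measure_ofReal_lt_tsum_le_tsum_measure {Ω : Type*} [MeasurableSpace Ω] (μ : Measure Ω)
    (X : ℕ → Ω → ℝ) {θ : ℕ → ℝ} {t : ℝ} (hθ : ∀ n, 0 ≤ θ n) (hθt : HasSum θ t) :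
    μ {ω | ENNReal.ofReal t < ∑' n, ENNReal.ofReal (X n ω)} ≤ ∑' n, μ {ω | θ n < X n ω} := by
  refine (measure_mono fun ω hω => ?_).trans (measure_iUnion_le _)
  by_contra hnot
  simp only [Set.mem_iUnion, Set.mem_ofPred_eq, not_exists, not_lt] at hnot
  refine (Set.mem_ofPred_eq ▸ hω).not_ge ?_
  calc ∑' n, ENNReal.ofReal (X n ω) ≤ ∑' n, ENNReal.ofReal (θ n) :=
        ENNReal.tsum_le_tsum fun n => ENNReal.ofReal_le_ofReal (hnot n)
    _ = ENNReal.ofReal t := by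
        rw [← ENNReal.ofReal_tsum_of_nonneg hθ hθt.summable, hθt.tsum_eq]

noncomputable def equalizingThreshold (ν : ℕ → ℝ) (c : ℝ) (n : ℕ) : ℝ :=
  -(ν n * (Real.log (ν n) + c))

theorem exp_neg_equalizingThreshold_div {ν : ℕ → ℝ} {n : ℕ} (hν : 0 < ν n) (c : ℝ) :
    Real.exp (-equalizingThreshold ν c n / ν n) = ν n * Real.exp c := by
  rw [equalizingThreshold, neg_neg, mul_div_cancel_left₀ _ hν.ne', Real.exp_add,
    Real.exp_log hν]

theorem hasSum_equalizingThreshold {ν : ℕ → ℝ} (hν : Summable ν)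
    (hνlog : Summable fun n => ν n * Real.log (ν n)) (c : ℝ) :
    HasSum (equalizingThreshold ν c)
      (-(∑' n, ν n * Real.log (ν n)) - c * ∑' n, ν n) := by
  have hθ : equalizingThreshold ν c = fun n => -(ν n * Real.log (ν n) + ν n * c) :=
    funext fun n => by rw [equalizingThreshold]; ring
  rw [hθ, show -(∑' n, ν n * Real.log (ν n)) - c * ∑' n, ν n
      = -(∑' n, ν n * Real.log (ν n) + (∑' n, ν n) * c) by ring]
  exact (hνlog.hasSum.add (hν.hasSum.mul_right c)).neg

theorem stmt_4_general {Ω : Type*} [MeasurableSpace Ω] (μ : Measure Ω)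
    [IsProbabilityMeasure μ]
    (T : ℕ → Ω → ℝ)
    (ν : ℕ → ℝ) (hνpos : ∀ n, 0 < ν n)
    (hνsum : Summable ν)
    (hΛsum : Summable fun n => |ν n * Real.log (ν n)|)
    (htail : ∀ n, ∀ t : ℝ, 0 ≤ t →
      μ {ω | t < T n ω} ≤ ENNReal.ofReal (Real.exp (-t / ν n))) :
    ∀ t : ℝ, 0 ≤ t →
      μ {ω | ENNReal.ofReal t < ∑' n, ENNReal.ofReal (T n ω)} ≤
        ENNReal.ofReal ((∑' n, ν n) *
          Real.exp (((-∑' n, ν n * Real.log (ν n)) - t) / (∑' n, ν n))) := by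
  intro t _
  set V := ∑' n, ν n
  set c := ((-∑' n, ν n * Real.log (ν n)) - t) / V
  set θ := equalizingThreshold ν c
  have hVpos : 0 < V := hνsum.tsum_pos (fun n => (hνpos n).le) 0 (hνpos 0)
  have hθt : HasSum θ t := by
    convert hasSum_equalizingThreshold hνsum (summable_abs_iff.mp hΛsum) c using 1
    simp only [c]
    field_simp
    ring
  have hterm : ∀ n, ENNReal.ofReal (Real.exp (-θ n / ν n)) = ENNReal.ofReal (ν n * Real.exp c) :=
    fun n => by rw [exp_neg_equalizingThreshold_div (hνpos n)]
  by_cases hθ : ∀ n, 0 ≤ θ n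
  · calc _ ≤ ∑' n, μ {ω | θ n < T n ω} := measure_ofReal_lt_tsum_le_tsum_measure μ T hθ hθt
      _ ≤ ∑' n, ENNReal.ofReal (ν n * Real.exp c) :=
          ENNReal.tsum_le_tsum fun n => hterm n ▸ htail n (θ n) (hθ n)
      _ = ENNReal.ofReal (V * Real.exp c) := by
          rw [← ENNReal.ofReal_tsum_of_nonneg
            (fun n => mul_nonneg (hνpos n).le (Real.exp_pos c).le) (hνsum.mul_right _),
            tsum_mul_right]
  · obtain ⟨n, hn⟩ := not_forall.mp hθ
    calc _ ≤ 1 := prob_le_one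
      _ ≤ ENNReal.ofReal (ν n * Real.exp c) := by
          rw [← hterm n, ← ENNReal.ofReal_one]
          exact ENNReal.ofReal_le_ofReal
            (Real.one_le_exp (div_nonneg (by linarith [not_le.mp hn]) (hνpos n).le))
      _ ≤ ENNReal.ofReal (V * Real.exp c) := by
          gcongr
          exact hνsum.le_tsum n fun k _ => (hνpos k).le

/-- **Exponential tail bound for a sum of exponentially dominated times.**
If the nonnegative random variables `T_n` satisfy `P(T_n > t) ≤ e^{-t/ν_n}`
with `ν_n > 0`, `ν = ∑ ν_n < ∞` and `Λ = -∑ ν_n log ν_n` (absolutely)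
finite, then `P(∑_n T_n > t) ≤ ν e^{(Λ - t)/ν}` for every `t ≥ 0`. -/
theorem stmt_4 {Ω : Type*} [MeasurableSpace Ω] (μ : Measure Ω)
    [IsProbabilityMeasure μ]
    (T : ℕ → Ω → ℝ) (hTmeas : ∀ n, Measurable (T n))
    (hTnonneg : ∀ n ω, 0 ≤ T n ω)
    (ν : ℕ → ℝ) (hνpos : ∀ n, 0 < ν n)
    (hνsum : Summable ν)
    (hΛsum : Summable fun n => |ν n * Real.log (ν n)|)
    (htail : ∀ n, ∀ t : ℝ, 0 ≤ t →
      μ {ω | t < T n ω} ≤ ENNReal.ofReal (Real.exp (-t / ν n))) :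
    ∀ t : ℝ, 0 ≤ t →
      μ {ω | ENNReal.ofReal t < ∑' n, ENNReal.ofReal (T n ω)} ≤
        ENNReal.ofReal ((∑' n, ν n) *
          Real.exp (((-∑' n, ν n * Real.log (ν n)) - t) / (∑' n, ν n))) :=
  stmt_4_general μ T ν hνpos hνsum hΛsum htail
end
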